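/- Fix a recursive bijection pair : ℕ×ℕ → ℕ encoding rational numbers as natural numbers (a rational a/b encoded as pair(a,b)). The probabilistic function I2P : ℕ → 𝒫(ℕ), defined on an encoding of a rational x by I2P(x)(1) = x and I2P(x)(0) = 1−x whenever 0 ≤ x ≤ 1 (and I2P(x)(y) = 0 in all other cases), is probabilistic recursive. -/

import Mathlib

noncomputable section
open scoped Classical

/-- A pseudodistribution on ℕ: pointwise nonnegative, summable, with total mass at most 1. -/
def IsPseudoDist (D : ℕ → ℝ) : Prop :=
  (∀ n, 0 ≤ D n) ∧ Summable D ∧ ∑' n, D n ≤ 1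

/-- Generalized composition:
(f ⊙ (g₁,…,gₙ))(x⃗)(y) = ∑_{z⃗} f(z⃗)(y) · ∏ᵢ gᵢ(x⃗)(zᵢ). -/
noncomputable def genComp {n k : ℕ} (f : (Fin n → ℕ) → ℕ → ℝ)
    (g : Fin n → (Fin k → ℕ) → ℕ → ℝ) : (Fin k → ℕ) → ℕ → ℝ :=
  fun x y => ∑' z : Fin n → ℕ, f z y * ∏ i, g i x (z i)

/-- Auxiliary for primitive recursion: h(x⃗,0) = f(x⃗),
h(x⃗,y+1)(w) = ∑_z g(x⃗,y,z)(w) · h(x⃗,y)(z). -/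
noncomputable def primRecAux {k : ℕ} (f : (Fin k → ℕ) → ℕ → ℝ)
    (g : (Fin (k + 2) → ℕ) → ℕ → ℝ) (x : Fin k → ℕ) : ℕ → ℕ → ℝ
  | 0 => f x
  | y + 1 => fun w =>
      ∑' z : ℕ, g (Fin.snoc (Fin.snoc x y) z) w * primRecAux f g x y z

/-- Primitive recursion of probabilistic functions, as a function on ℕ^(k+1). -/
noncomputable def primRec {k : ℕ} (f : (Fin k → ℕ) → ℕ → ℝ)
    (g : (Fin (k + 2) → ℕ) → ℕ → ℝ) : (Fin (k + 1) → ℕ) → ℕ → ℝ :=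
  fun v => primRecAux f g (Fin.init v) (v (Fin.last k))

/-- Minimization: (μf)(x⃗)(y) = f(x⃗,y)(0) · ∏_{z<y} (∑_{k>0} f(x⃗,z)(k)). -/
noncomputable def minimize {k : ℕ} (f : (Fin (k + 1) → ℕ) → ℕ → ℝ) :
    (Fin k → ℕ) → ℕ → ℝ :=
  fun x y =>
    f (Fin.snoc x y) 0 *
      ∏ z ∈ Finset.range y, ∑' m : {m : ℕ // 0 < m}, f (Fin.snoc x z) (m : ℕ)

/-- The class PR of probabilistic recursive functions: the smallest class of
probabilistic functions containing the basic probabilistic functions (zero,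
successor, projections, fair coin) and closed under generalized composition,
primitive recursion and minimization. -/
inductive PR : {k : ℕ} → ((Fin k → ℕ) → ℕ → ℝ) → Prop where
  /-- The zero function z(n) = Dirac(0). -/
  | zero : PR (fun (_ : Fin 1 → ℕ) (y : ℕ) => if y = 0 then (1 : ℝ) else 0)
  /-- The successor function s(n) = Dirac(n+1). -/
  | succ : PR (fun (x : Fin 1 → ℕ) (y : ℕ) => if y = x 0 + 1 then (1 : ℝ) else 0)
  /-- The projections Πⁿₘ(x⃗) = Dirac(xₘ). -/
  | proj {n : ℕ} (m : Fin n) :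
      PR (fun (x : Fin n → ℕ) (y : ℕ) => if y = x m then (1 : ℝ) else 0)
  /-- The fair coin r(x), assigning probability 1/2 to each of x and x+1. -/
  | coin : PR (fun (x : Fin 1 → ℕ) (y : ℕ) =>
      if y = x 0 ∨ y = x 0 + 1 then (1 : ℝ) / 2 else 0)
  /-- Closure under generalized composition. -/
  | comp {n k : ℕ} {f : (Fin n → ℕ) → ℕ → ℝ} {g : Fin n → (Fin k → ℕ) → ℕ → ℝ} :
      PR f → (∀ i, PR (g i)) → PR (genComp f g)
  /-- Closure under primitive recursion. -/
  | primrec {k : ℕ} {f : (Fin k → ℕ) → ℕ → ℝ} {g : (Fin (k + 2) → ℕ) → ℕ → ℝ} :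
      PR f → PR g → PR (primRec f g)
  /-- Closure under minimization. -/
  | minim {k : ℕ} {f : (Fin (k + 1) → ℕ) → ℕ → ℝ} :
      PR f → PR (minimize f)

/-- The probabilistic function I2P. A rational a/b is encoded as the natural
number Nat.pair a b (a fixed recursive bijection ℕ×ℕ ≃ ℕ with computable inverse).
On the encoding of a rational x with 0 ≤ x ≤ 1, I2P returns 1 with probability x
and 0 with probability 1−x; in all other cases it returns the zero distribution. -/
def I2P : (Fin 1 → ℕ) → ℕ → ℝ := fun v y =>
  let a : ℕ := (Nat.unpair (v 0)).1
  let b : ℕ := (Nat.unpair (v 0)).2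
  if 0 < b ∧ 0 ≤ (a : ℝ) / (b : ℝ) ∧ (a : ℝ) / (b : ℝ) ≤ 1 then
    (if y = 1 then (a : ℝ) / (b : ℝ)
     else if y = 0 then 1 - (a : ℝ) / (b : ℝ)
     else 0)
  else 0

/-!
Every primitive recursive function, viewed as a Dirac distribution, is probabilistic recursive,
and minimizing such a Dirac turns a primitive recursive `Option ℕ`-valued function into the
Dirac at its value (the zero distribution where the value is `none`). Minimizing the fair coin gives the geometric distribution
`P(m) = 2^-(m+1)`. To sample `1` with probability `x = a/b ∈ [0, 1]`, draw `m` geometrically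
and output the `m`-th binary digit `d_m` of `x`: the output is `1` with probability
`∑ d_m 2^-(m+1) = x`.
-/

def dirac {k : ℕ} (φ : (Fin k → ℕ) → ℕ) : (Fin k → ℕ) → ℕ → ℝ :=
  fun x y => if y = φ x then 1 else 0

theorem genComp_dirac {n k : ℕ} (f : (Fin n → ℕ) → ℕ → ℝ) (φ : Fin n → (Fin k → ℕ) → ℕ) :
    genComp f (fun i => dirac (φ i)) = fun x => f fun i => φ i x := by
  funext x y
  rw [genComp, tsum_eq_single (fun i => φ i x)]
  · simp [dirac]
  · intro z hz
    obtain ⟨i, hi⟩ := Function.ne_iff.mp hz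
    rw [Finset.prod_eq_zero (Finset.mem_univ i) (by simp [dirac, hi]), mul_zero]

theorem PR.comp_dirac {n k : ℕ} {f : (Fin n → ℕ) → ℕ → ℝ} {φ : Fin n → (Fin k → ℕ) → ℕ}
    (hf : PR f) (hφ : ∀ i, PR (dirac (φ i))) : PR fun x => f fun i => φ i x :=
  genComp_dirac f φ ▸ PR.comp hf hφ

theorem PR.comp_proj {n k : ℕ} {f : (Fin n → ℕ) → ℕ → ℝ} (hf : PR f) (σ : Fin n → Fin k) :
    PR fun x => f fun i => x (σ i) :=
  hf.comp_dirac fun i => PR.proj (σ i)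

theorem tsum_subtype_pos_ite_eq (c : ℕ) :
    ∑' m : {m : ℕ // 0 < m}, (if (m : ℕ) = c then (1 : ℝ) else 0) = if c ≠ 0 then 1 else 0 := by
  rcases Nat.eq_zero_or_pos c with rfl | hc
  · simp [fun m : {m : ℕ // 0 < m} => m.2.ne']
  · rw [tsum_eq_single ⟨c, hc⟩] <;> simp [hc.ne', Subtype.ext_iff]

theorem minimize_dirac {k : ℕ} (ψ : (Fin (k + 1) → ℕ) → ℕ) (x : Fin k → ℕ) (y : ℕ) :
    minimize (dirac ψ) x y =
      if ψ (Fin.snoc x y) = 0 ∧ ∀ z < y, ψ (Fin.snoc x z) ≠ 0 then 1 else 0 := by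
  simp only [minimize, dirac, tsum_subtype_pos_ite_eq, Finset.prod_boole, Finset.mem_range,
    ite_zero_mul_ite_zero, mul_one, eq_comm (a := 0)]

theorem primRec_dirac {k : ℕ} (F : (Fin k → ℕ) → ℕ) (G : (Fin (k + 2) → ℕ) → ℕ) :
    primRec (dirac F) (dirac G) = dirac fun v =>
      Nat.rec (motive := fun _ => ℕ) (F (Fin.init v))
        (fun y ih => G (Fin.snoc (Fin.snoc (Fin.init v) y) ih)) (v (Fin.last k)) := by
  suffices ∀ x y, primRecAux (dirac F) (dirac G) x y = fun w =>
      if w = Nat.rec (motive := fun _ => ℕ) (F x) (fun y ih => G (Fin.snoc (Fin.snoc x y) ih)) y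
      then 1 else 0 from funext fun v => this _ _
  intro x y
  induction y with
  | zero => rfl
  | succ y ih =>
    funext w
    simp only [primRecAux, ih]
    rw [tsum_eq_single (Nat.rec (motive := fun _ => ℕ) (F x)
      (fun y ih => G (Fin.snoc (Fin.snoc x y) ih)) y)]
    · simp [dirac]
    · intro z hz
      simp [hz]

theorem PR.dirac_zero_of_fin_zero : PR (dirac fun _ : Fin 0 → ℕ => 0) := by
  -- The least `y` with `y = 0`.
  convert PR.minim (PR.proj (0 : Fin 1)) using 1
  funext x y
  change _ = minimize (dirac fun v => v 0) x y
  rw [minimize_dirac]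
  have hsnoc (w : ℕ) : (Fin.snoc x w : Fin 1 → ℕ) 0 = w := rfl
  rcases Nat.eq_zero_or_pos y with rfl | hy
  · simp [dirac, hsnoc]
  · simp [dirac, hsnoc, hy.ne']

theorem PR.dirac_rec {n : ℕ} {F : (Fin n → ℕ) → ℕ} {G : (Fin (n + 2) → ℕ) → ℕ}
    (hF : PR (dirac F)) (hG : PR (dirac G)) :
    PR (dirac fun v : Fin (n + 1) → ℕ => Nat.rec (motive := fun _ => ℕ) (F (Fin.tail v))
      (fun y ih => G (Fin.cons y (Fin.cons ih (Fin.tail v)))) (v 0)) := by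
  -- `primRec` recurses on the last argument and feeds `(x, y, ih)` to the step function, whereas
  -- `Nat.Primrec'.prec` recurses on the first one and feeds `(y, ih, x)`: reorder both.
  let σ : Fin (n + 2) → Fin (n + 2) :=
    Fin.cons (Fin.last n).castSucc (Fin.cons (Fin.last (n + 1)) fun i => i.castSucc.castSucc)
  have hσ (x : Fin n → ℕ) (y ih : ℕ) :
      (fun i => Fin.snoc (α := fun _ => ℕ) (Fin.snoc (α := fun _ => ℕ) x y) ih (σ i)) =
        Fin.cons (α := fun _ => ℕ) y (Fin.cons (α := fun _ => ℕ) ih x) := by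
    funext i
    refine Fin.cases ?_ (Fin.cases ?_ fun j => ?_) i <;> simp [σ]
  have hrec := PR.primrec (g := dirac fun w => G fun i => w (σ i)) hF (hG.comp_proj σ)
  rw [primRec_dirac] at hrec
  convert hrec.comp_proj (Fin.snoc Fin.succ 0) using 1
  funext v y
  have hv : (Fin.init fun i => v (Fin.snoc (α := fun _ => Fin (n + 1)) Fin.succ 0 i)) =
      Fin.tail v := by
    funext i
    simp [Fin.init, Fin.tail]
  simp only [dirac, hσ, hv, Fin.snoc_last]

theorem PR.dirac_of_primrec' {n : ℕ} {f : List.Vector ℕ n → ℕ} (hf : Nat.Primrec' f) :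
    PR (dirac fun x => f (List.Vector.ofFn x)) := by
  induction hf with
  | zero => exact PR.dirac_zero_of_fin_zero
  | succ =>
    simp only [List.Vector.head_ofFn]
    exact PR.succ
  | get i =>
    simp only [List.Vector.get_ofFn]
    exact PR.proj i
  | comp g _ _ hf hg => exact hf.comp_dirac hg
  | prec _ _ hf hg =>
    convert PR.dirac_rec hf hg using 3 with v
    simp only [List.Vector.head_ofFn, List.Vector.tail_ofFn]
    rfl

theorem PR.dirac_of_primrec {n : ℕ} {f : (Fin n → ℕ) → ℕ} (hf : Primrec f) : PR (dirac f) := by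
  have hget (x : Fin n → ℕ) : (List.Vector.ofFn x).get = x := funext (List.Vector.get_ofFn x)
  simpa only [hget] using PR.dirac_of_primrec' (Nat.Primrec'.of_prim (hf.comp .vector_get'))

theorem PR.dirac_option {k : ℕ} {f : (Fin k → ℕ) → Option ℕ} (hf : Primrec f) :
    PR fun x y => if f x = some y then 1 else 0 := by
  have hinit : Primrec (Fin.init : (Fin (k + 1) → ℕ) → Fin k → ℕ) :=
    (Primrec.vector_get'.comp (Primrec.vector_ofFn fun i =>
      Primrec.fin_app.comp .id (.const i.castSucc))).of_eq fun v => by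
        funext i
        simp [Fin.init]
  have hlast : Primrec fun v : Fin (k + 1) → ℕ => v (Fin.last k) :=
    Primrec.fin_app.comp .id (.const _)
  have hψ : Primrec fun v : Fin (k + 1) → ℕ =>
      if f (Fin.init v) = some (v (Fin.last k)) then 0 else 1 :=
    Primrec.ite (Primrec.eq.comp (hf.comp hinit) (Primrec.option_some.comp hlast))
      (.const 0) (.const 1)
  -- `ψ (x, ·)` vanishes exactly at the value of `f x`, so its least zero is that value.
  convert PR.minim (PR.dirac_of_primrec hψ) using 1
  funext x y
  rw [minimize_dirac]
  simp only [Fin.init_snoc, Fin.snoc_last]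
  grind

def geometric {k : ℕ} : (Fin k → ℕ) → ℕ → ℝ := fun _ y => (1 / 2 : ℝ) ^ (y + 1)

theorem geometric_mem_PR (k : ℕ) : PR (geometric (k := k)) := by
  have hcoin : PR fun (_ : Fin (k + 1) → ℕ) (y : ℕ) => if y = 0 ∨ y = 1 then (1 : ℝ) / 2 else 0 :=
    PR.coin.comp_dirac (φ := fun _ _ => 0) fun _ => PR.dirac_of_primrec (Primrec.const 0)
  have hpos : ∑' m : {m : ℕ // 0 < m}, (if (m : ℕ) = 0 ∨ (m : ℕ) = 1 then (1 : ℝ) / 2 else 0)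
      = 1 / 2 := by
    rw [tsum_eq_single ⟨1, one_pos⟩]
    · simp
    · intro m hm
      simp [m.2.ne', Subtype.ext_iff.not.mp hm]
  -- Flip coins until the first `0`.
  convert PR.minim hcoin using 1
  funext x y
  simp only [minimize, geometric, hpos, Finset.prod_const, Finset.card_range]
  norm_num [pow_succ']

theorem PR.bind {k : ℕ} {g : (Fin k → ℕ) → ℕ → ℝ} {f : (Fin (k + 1) → ℕ) → ℕ → ℝ}
    (hg : PR g) (hf : PR f) : PR fun x y => ∑' m, g x m * f (Fin.snoc x m) y := by
  let gs : Fin (k + 1) → (Fin k → ℕ) → ℕ → ℝ :=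
    Fin.snoc (α := fun _ => (Fin k → ℕ) → ℕ → ℝ) (fun i => dirac fun x => x i) g
  have hgs : ∀ i, PR (gs i) :=
    Fin.lastCases (by simpa [gs] using hg) fun i => by
      simp only [gs, Fin.snoc_castSucc]
      exact PR.proj i
  convert PR.comp hf hgs using 1
  funext x y
  have hprod (z : Fin (k + 1) → ℕ) :
      ∏ i, gs i x (z i) = if Fin.init z = x then g x (z (Fin.last k)) else 0 := by
    simp [Fin.prod_univ_castSucc, gs, dirac, Finset.prod_boole, funext_iff, Fin.init, eq_comm]
  have hsupp : (Function.support fun z => f z y * ∏ i, gs i x (z i)) ⊆ Set.range (Fin.snoc x) := by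
    intro z hz
    have hz : Fin.init z = x := by
      by_contra h
      simp [hprod, h] at hz
    exact ⟨z (Fin.last k), hz ▸ Fin.snoc_init_self z⟩
  rw [genComp, ← (Fin.snoc_injective2.right x).tsum_eq hsupp]
  simp [hprod, mul_comm]

theorem hasSum_half_pow_succ : HasSum (fun n : ℕ => (1 / 2 : ℝ) ^ (n + 1)) 1 := by
  simpa [pow_succ'] using hasSum_geometric_two.mul_left (1 / 2 : ℝ)

theorem tsum_half_pow_mul_ite_digit_eq {d : ℕ → ℕ} (hd : ∀ n, d n < 2) {x : ℝ}
    (hx : HasSum (fun n => (d n : ℝ) * (1 / 2) ^ (n + 1)) x) (y : ℕ) :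
    ∑' n, (1 / 2 : ℝ) ^ (n + 1) * (if d n = y then 1 else 0) =
      if y = 1 then x else if y = 0 then 1 - x else 0 := by
  have hd' (n : ℕ) : d n = 0 ∨ d n = 1 := by have := hd n; omega
  rcases y with _ | _ | y
  · refine ((hasSum_half_pow_succ.sub hx).congr_fun fun n => ?_).tsum_eq
    rcases hd' n with h | h <;> simp [h]
  · refine (hx.congr_fun fun n => ?_).tsum_eq
    rcases hd' n with h | h <;> simp [h]
  · have hne (n : ℕ) : d n ≠ y + 2 := by have := hd n; omega
    simp [hne]

/-- For `a < b` these are the binary digits of `a / b`; for `a = b` we take the expansion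
`0.111…` of `1`, since the floor-based digits of `1` all vanish. -/
def binaryDigit (a b n : ℕ) : ℕ := if a < b then a * 2 ^ (n + 1) / b % 2 else 1

theorem binaryDigit_lt_two (a b n : ℕ) : binaryDigit a b n < 2 := by
  unfold binaryDigit
  split_ifs <;> omega

theorem mul_two_pow_succ_div_eq (a b n : ℕ) :
    a * 2 ^ (n + 1) / b = 2 * (a * 2 ^ n / b) + a * 2 ^ (n + 1) / b % 2 := by
  have : a * 2 ^ (n + 1) / b / 2 = a * 2 ^ n / b := by
    rw [Nat.div_div_eq_div_mul, pow_succ, ← mul_assoc, Nat.mul_div_mul_right _ _ two_pos]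
  rw [← this, Nat.div_add_mod]

theorem sum_binaryDigit_of_lt {a b : ℕ} (hab : a < b) (m : ℕ) :
    ∑ n ∈ Finset.range m, (binaryDigit a b n : ℝ) * (1 / 2) ^ (n + 1) =
      (a * 2 ^ m / b : ℕ) * (1 / 2) ^ m := by
  induction m with
  | zero => simp [Nat.div_eq_of_lt hab]
  | succ m ih =>
    rw [Finset.sum_range_succ, ih, mul_two_pow_succ_div_eq a b m, binaryDigit, if_pos hab]
    push_cast
    ring

theorem hasSum_binaryDigit {a b : ℕ} (hb : 0 < b) (hab : a ≤ b) :
    HasSum (fun n => (binaryDigit a b n : ℝ) * (1 / 2) ^ (n + 1)) (a / b) := by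
  rcases hab.lt_or_eq with hab | rfl
  swap
  · simpa [binaryDigit, hb.ne'] using hasSum_half_pow_succ
  rw [hasSum_iff_tendsto_nat_of_nonneg (fun n => by positivity)]
  simp only [sum_binaryDigit_of_lt hab]
  have hfloor (m : ℕ) : ((a * 2 ^ m / b : ℕ) : ℝ) = ⌊(a / b : ℝ) * 2 ^ m⌋₊ := by
    rw [div_mul_eq_mul_div, ← Nat.floor_div_eq_div (K := ℝ)]
    push_cast
    rfl
  have hcancel (m : ℕ) : (2 : ℝ) ^ m * (1 / 2) ^ m = 1 := by
    rw [← mul_pow]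
    norm_num
  have hpow : Filter.Tendsto (fun m : ℕ => (1 / 2 : ℝ) ^ m) Filter.atTop (nhds 0) :=
    tendsto_pow_atTop_nhds_zero_of_lt_one (by norm_num) (by norm_num)
  refine tendsto_of_tendsto_of_tendsto_of_le_of_le (g := fun m => (a / b : ℝ) - (1 / 2) ^ m)
    (by simpa using tendsto_const_nhds.sub hpow) tendsto_const_nhds (fun m => ?_) (fun m => ?_)
  all_goals simp only [hfloor]
  · calc (a / b : ℝ) - (1 / 2) ^ m = ((a / b : ℝ) * 2 ^ m - 1) * (1 / 2) ^ m := by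
          linear_combination (-(a / b : ℝ)) * hcancel m
      _ ≤ _ := by
          gcongr
          linarith [Nat.lt_floor_add_one ((a / b : ℝ) * 2 ^ m)]
  · calc _ ≤ (a / b : ℝ) * 2 ^ m * (1 / 2) ^ m := by
          gcongr
          exact Nat.floor_le (by positivity)
      _ = a / b := by linear_combination (a / b : ℝ) * hcancel m

def ratDigit (q n : ℕ) : Option ℕ :=
  if 0 < q.unpair.2 ∧ q.unpair.1 ≤ q.unpair.2 then
    some (binaryDigit q.unpair.1 q.unpair.2 n)
  else none

theorem primrec₂_ratDigit : Primrec₂ ratDigit := by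
  have ha : Primrec₂ fun q _ : ℕ => q.unpair.1 := Primrec.fst.comp (Primrec.unpair.comp .fst)
  have hb : Primrec₂ fun q _ : ℕ => q.unpair.2 := Primrec.snd.comp (Primrec.unpair.comp .fst)
  have hpow : Primrec₂ fun q n : ℕ => 2 ^ (n + 1) :=
    (Primrec₂.unpaired'.mp Nat.Primrec.pow).comp (.const 2) (Primrec.succ.comp .snd)
  have hdigit : Primrec₂ fun q n : ℕ => binaryDigit q.unpair.1 q.unpair.2 n :=
    Primrec.ite (Primrec.nat_lt.comp ha hb)
      (Primrec.nat_mod.comp (Primrec.nat_div.comp (Primrec.nat_mul.comp ha hpow) hb) (.const 2))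
      (.const 1)
  exact Primrec.ite
    (PrimrecPred.and (Primrec.nat_lt.comp (.const 0) hb) (Primrec.nat_le.comp ha hb))
    (Primrec.option_some.comp hdigit) (.const none)

theorem I2P_eq_tsum (x : Fin 1 → ℕ) (y : ℕ) :
    I2P x y = ∑' m, (1 / 2 : ℝ) ^ (m + 1) * if ratDigit (x 0) m = some y then 1 else 0 := by
  simp only [I2P]
  set a := (x 0).unpair.1
  set b := (x 0).unpair.2
  by_cases hv : 0 < b ∧ a ≤ b
  · have hb : (0 : ℝ) < b := by exact_mod_cast hv.1
    have hcond : 0 < b ∧ 0 ≤ (a : ℝ) / b ∧ (a : ℝ) / b ≤ 1 :=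
      ⟨hv.1, by positivity, (div_le_one hb).mpr (by exact_mod_cast hv.2)⟩
    have hdigit (m : ℕ) : ratDigit (x 0) m = some (binaryDigit a b m) := if_pos hv
    simp only [if_pos hcond, hdigit, Option.some.injEq]
    exact (tsum_half_pow_mul_ite_digit_eq (binaryDigit_lt_two a b)
      (hasSum_binaryDigit hv.1 hv.2) y).symm
  · have hcond : ¬(0 < b ∧ 0 ≤ (a : ℝ) / b ∧ (a : ℝ) / b ≤ 1) := by
      rintro ⟨hb, -, hab⟩
      exact hv ⟨hb, by exact_mod_cast (div_le_one (by positivity)).mp hab⟩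
    have hdigit (m : ℕ) : ratDigit (x 0) m = none := if_neg hv
    simp [hcond, hdigit]

/-- the probabilistic function I2P is probabilistic recursive. -/
theorem I2P_mem_PR : PR I2P := by
  have hdigit : Primrec fun v : Fin 2 → ℕ => ratDigit (v 0) (v 1) :=
    primrec₂_ratDigit.comp (Primrec.fin_app.comp .id (.const 0))
      (Primrec.fin_app.comp .id (.const 1))
  convert PR.bind (geometric_mem_PR 1) (PR.dirac_option hdigit) using 1
  funext x y
  exact I2P_eq_tsum x y
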